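/- arXiv:2503.11602 — 2 statements merged into one kernel-verified Lean document; each statement's English description precedes it below -/
import Mathlib

section
/- Let A_d, Π, C_d, B_d, D_d be complex matrices of compatible sizes with Π = Π* ≥ 0, P := I + D_d*D_d + B_d*ΠB_d, V := D_d*C_d + B_d*ΠA_d, and suppose Π satisfies the CARE A_d*ΠA_d − Π + C_d*C_d = V*P⁻¹V. Then for all vectors w ∈ ℂⁿ and u ∈ ℂᵖ, with v := B_d u + A_d w, the following identity holds: (v*Πv − w*Πw) + ‖C_d w + D_d u‖² + ‖u‖² = ‖P^{−1/2}V w + P^{1/2} u‖². -/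
open Matrix ComplexOrder

lemma dpAux {k l : Type*} [Fintype k] [Fintype l]
    (A : Matrix k l ℂ) (x : l → ℂ) (z : k → ℂ) :
    star (A.mulVec x) ⬝ᵥ z = star x ⬝ᵥ Aᴴ.mulVec z := by
  rw [star_mulVec, dotProduct_mulVec]

/-- Finite-dimensional core of the operator-node Riccati equation: with
`v := B_d u + A_d w`, `(v*Πv − w*Πw) + ‖C_d w + D_d u‖² + ‖u‖² = ‖P^{-1/2}Vw + P^{1/2}u‖²`. -/
theorem stmt5 (n p m : ℕ)
    (Ad : Matrix (Fin n) (Fin n) ℂ) (Pm : Matrix (Fin n) (Fin n) ℂ)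
    (Cd : Matrix (Fin m) (Fin n) ℂ) (Bd : Matrix (Fin n) (Fin p) ℂ)
    (Dd : Matrix (Fin m) (Fin p) ℂ)
    (hPm : Pm.PosSemidef)
    (P : Matrix (Fin p) (Fin p) ℂ) (hP : P = 1 + Ddᴴ * Dd + Bdᴴ * Pm * Bd)
    (V : Matrix (Fin p) (Fin n) ℂ) (hV : V = Ddᴴ * Cd + Bdᴴ * Pm * Ad)
    (hCARE : Adᴴ * Pm * Ad - Pm + Cdᴴ * Cd = Vᴴ * P⁻¹ * V)
    (Phalf : Matrix (Fin p) (Fin p) ℂ) (hPhalfPos : Phalf.PosSemidef)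
    (hPhalfSq : Phalf * Phalf = P)
    (Pneghalf : Matrix (Fin p) (Fin p) ℂ) (hPneg : Pneghalf = Phalf⁻¹) :
    ∀ (w : Fin n → ℂ) (u : Fin p → ℂ),
      let v := Bd.mulVec u + Ad.mulVec w
      (star v ⬝ᵥ Pm.mulVec v - star w ⬝ᵥ Pm.mulVec w) +
          star (Cd.mulVec w + Dd.mulVec u) ⬝ᵥ (Cd.mulVec w + Dd.mulVec u) +
          star u ⬝ᵥ u =
        star (Pneghalf.mulVec (V.mulVec w) + Phalf.mulVec u) ⬝ᵥ
          (Pneghalf.mulVec (V.mulVec w) + Phalf.mulVec u) := by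
  have hPposdef : P.PosDef := by
    rw [hP]
    exact Matrix.PosDef.add_posSemidef
      ((Matrix.PosDef.one).add_posSemidef (posSemidef_conjTranspose_mul_self Dd))
      (hPm.conjTranspose_mul_mul_same Bd)
  have hPdet : IsUnit P.det := hPposdef.det_pos.ne'.isUnit
  have hPhalfDet : IsUnit Phalf.det :=
    isUnit_of_mul_isUnit_left (by rw [← Matrix.det_mul, hPhalfSq]; exact hPdet)
  have hPhalfH : Phalfᴴ = Phalf := hPhalfPos.isHermitian
  have hPmH : Pmᴴ = Pm := hPm.isHermitian
  have hNegH : Pneghalfᴴ = Pneghalf := by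
    rw [hPneg, Matrix.conjTranspose_nonsing_inv, hPhalfH]
  have hNP : Pneghalf * Phalf = 1 := by
    rw [hPneg]; exact Matrix.nonsing_inv_mul _ hPhalfDet
  have hNN : Pneghalf * Pneghalf = P⁻¹ := by
    rw [hPneg, ← Matrix.mul_inv_rev, hPhalfSq]
  intro w u
  simp only [mulVec_add, star_add, dotProduct_add, add_dotProduct, mulVec_mulVec,
    dpAux, Matrix.conjTranspose_mul, hNegH, hPhalfH, hPmH,
    Matrix.conjTranspose_conjTranspose]
  have eCARE := congrArg (fun M : Matrix (Fin n) (Fin n) ℂ => star w ⬝ᵥ M.mulVec w) hCARE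
  have eP := congrArg (fun M : Matrix (Fin p) (Fin p) ℂ => star u ⬝ᵥ M.mulVec u) hP
  have eV1 := congrArg (fun M : Matrix (Fin p) (Fin n) ℂ => star u ⬝ᵥ M.mulVec w) hV
  have eV2 := congrArg (fun M : Matrix (Fin n) (Fin p) ℂ => star w ⬝ᵥ M.mulVec u)
    (congrArg conjTranspose hV)
  simp only [sub_mulVec, add_mulVec, dotProduct_add, dotProduct_sub, mulVec_mulVec,
    Matrix.conjTranspose_mul, Matrix.conjTranspose_conjTranspose, hPmH, one_mulVec,
    Matrix.mul_assoc] at eCARE eP eV1 eV2 ⊢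
  have hPN : Phalf * Pneghalf = 1 := by
    rw [hPneg]; exact Matrix.mul_nonsing_inv _ hPhalfDet
  have h1 : Vᴴ * (Pneghalf * (Pneghalf * V)) = Vᴴ * (P⁻¹ * V) := by
    rw [← Matrix.mul_assoc Pneghalf, hNN]
  have h2 : Phalf * (Pneghalf * V) = V := by
    rw [← Matrix.mul_assoc, hPN, Matrix.one_mul]
  have h3 : Vᴴ * (Pneghalf * Phalf) = Vᴴ := by
    rw [hNP, Matrix.mul_one]
  rw [h1, h2, h3, hPhalfSq]
  simp only [Matrix.conjTranspose_add, Matrix.conjTranspose_mul,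
    Matrix.conjTranspose_conjTranspose, hPmH, add_mulVec, dotProduct_add,
    Matrix.mul_assoc] at eV2
  linear_combination eCARE - eP - eV1 - eV2
end

section
/- Let A_d, Π, C_d, B_d, D_d be complex matrices with Π Hermitian, P := I + D_d*D_d + B_d*ΠB_d invertible, V := D_d*C_d + B_d*ΠA_d, F_d := −P⁻¹V, and suppose the CARE A_d*ΠA_d − Π + C_d*C_d = V*P⁻¹V holds. Define for complex s the matrices G(s) := C_d(e^{sT} − A_d)⁻¹B_d + D_d and χ(s) := P^{1/2}(I − F_d(e^{sT} − A_d)⁻¹B_d), where T > 0 is fixed and s is such that e^{sT} and e^{−sT} are not eigenvalues of A_d. Then χ(−s̄)*χ(s) = I + G(−s̄)*G(s). -/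
open Matrix ComplexOrder

/-- Spectral factorization of the Popov function: `χ(−s̄)*χ(s) = I + G(−s̄)*G(s)`. -/
theorem stmt6 (n p m : ℕ)
    (Ad Pm : Matrix (Fin n) (Fin n) ℂ) (Cd : Matrix (Fin m) (Fin n) ℂ)
    (Bd : Matrix (Fin n) (Fin p) ℂ) (Dd : Matrix (Fin m) (Fin p) ℂ)
    (hPm : Pm.IsHermitian)
    (P : Matrix (Fin p) (Fin p) ℂ) (hP : P = 1 + Ddᴴ * Dd + Bdᴴ * Pm * Bd)
    (hPinv : IsUnit P.det)
    (V : Matrix (Fin p) (Fin n) ℂ) (hV : V = Ddᴴ * Cd + Bdᴴ * Pm * Ad)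
    (Fd : Matrix (Fin p) (Fin n) ℂ) (hFd : Fd = -(P⁻¹ * V))
    (hCARE : Adᴴ * Pm * Ad - Pm + Cdᴴ * Cd = Vᴴ * P⁻¹ * V)
    (Phalf : Matrix (Fin p) (Fin p) ℂ) (hPhalfHerm : Phalf.IsHermitian)
    (hPhalfSq : Phalf * Phalf = P)
    (T : ℝ) (hT : 0 < T)
    (s : ℂ)
    (hs : IsUnit (Complex.exp (s * T) • (1 : Matrix (Fin n) (Fin n) ℂ) - Ad).det)
    (hs' : IsUnit (Complex.exp (-(starRingEnd ℂ s) * T) •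
      (1 : Matrix (Fin n) (Fin n) ℂ) - Ad).det) :
    (Phalf * (1 - Fd * (Complex.exp (-(starRingEnd ℂ s) * T) •
        (1 : Matrix (Fin n) (Fin n) ℂ) - Ad)⁻¹ * Bd))ᴴ *
      (Phalf * (1 - Fd * (Complex.exp (s * T) •
        (1 : Matrix (Fin n) (Fin n) ℂ) - Ad)⁻¹ * Bd)) =
    1 + (Cd * (Complex.exp (-(starRingEnd ℂ s) * T) •
        (1 : Matrix (Fin n) (Fin n) ℂ) - Ad)⁻¹ * Bd + Dd)ᴴ *
      (Cd * (Complex.exp (s * T) • (1 : Matrix (Fin n) (Fin n) ℂ) - Ad)⁻¹ * Bd + Dd) := by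
  set z : ℂ := Complex.exp (s * T) with hz
  set w : ℂ := Complex.exp (-(starRingEnd ℂ s) * T) with hw
  set Az : Matrix (Fin n) (Fin n) ℂ := z • 1 - Ad with hAz
  set Aw : Matrix (Fin n) (Fin n) ℂ := w • 1 - Ad with hAw
  set R : Matrix (Fin n) (Fin n) ℂ := Az⁻¹ with hRdef
  set S : Matrix (Fin n) (Fin n) ℂ := Aw⁻¹ with hSdef
  set M : Matrix (Fin n) (Fin n) ℂ := Sᴴ with hMdef
  set N : Matrix (Fin n) (Fin n) ℂ := (starRingEnd ℂ w) • 1 - Adᴴ with hNdef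
  -- scalar fact:  conj w * z = 1
  have hzw : (starRingEnd ℂ w) * z = 1 := by
    rw [hz, hw, ← Complex.exp_conj]
    rw [← Complex.exp_add]
    simp [Complex.exp_zero]
  -- resolvent identities
  have hR1 : Az * R = 1 := Matrix.mul_nonsing_inv _ hs
  have hR2 : R * Az = 1 := Matrix.nonsing_inv_mul _ hs
  have hS1 : Aw * S = 1 := Matrix.mul_nonsing_inv _ hs'
  have hS2 : S * Aw = 1 := Matrix.nonsing_inv_mul _ hs'
  have hAwH : Awᴴ = N := by
    rw [hAw, hNdef, conjTranspose_sub, conjTranspose_smul, conjTranspose_one]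
    rfl
  have hM1 : M * N = 1 := by
    rw [hMdef, ← hAwH, ← conjTranspose_mul, hS1, conjTranspose_one]
  have hM2 : N * M = 1 := by
    rw [hMdef, ← hAwH, ← conjTranspose_mul, hS2, conjTranspose_one]
  -- facts from the Riccati data
  have hPH : Pᴴ = P := by
    rw [hP]
    simp [conjTranspose_add, conjTranspose_mul, hPm.eq, Matrix.mul_assoc]
  have hPF : P * Fd = -V := by
    rw [hFd, Matrix.mul_neg, ← Matrix.mul_assoc, Matrix.mul_nonsing_inv _ hPinv,
      Matrix.one_mul]
  have hFP : Fdᴴ * P = -Vᴴ := by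
    have := congrArg conjTranspose hPF
    rwa [conjTranspose_mul, hPH, conjTranspose_neg] at this
  have hFPF : Fdᴴ * (P * Fd) = Adᴴ * Pm * Ad - Pm + Cdᴴ * Cd := by
    rw [← Matrix.mul_assoc, hFP, Matrix.neg_mul, hFd, Matrix.mul_neg, neg_neg, hCARE,
      Matrix.mul_assoc]
  have hVh : Vᴴ = Cdᴴ * Dd + Adᴴ * Pm * Bd := by
    rw [hV]
    simp [conjTranspose_add, conjTranspose_mul, hPm.eq, Matrix.mul_assoc]
  -- the key resolvent identity
  have hMN : ∀ X : Matrix (Fin n) (Fin n) ℂ, M * (N * X) = X := fun X => by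
    rw [← Matrix.mul_assoc, hM1, Matrix.one_mul]
  have hkey : Pm + M * (Adᴴ * Pm) + Pm * (Ad * R) + M * ((Adᴴ * (Pm * Ad) - Pm) * R)
      = 0 := by
    have e1 : (N + Adᴴ) * (Pm * (Az + Ad)) = Pm := by
      have h1 : N + Adᴴ = (starRingEnd ℂ w) • 1 := by rw [hNdef, sub_add_cancel]
      have h2 : Az + Ad = z • 1 := by rw [hAz, sub_add_cancel]
      rw [h1, h2, Matrix.smul_mul, Matrix.one_mul, Matrix.mul_smul, Matrix.mul_one,
        smul_smul, hzw, one_smul]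
    calc Pm + M * (Adᴴ * Pm) + Pm * (Ad * R) + M * ((Adᴴ * (Pm * Ad) - Pm) * R)
        = M * (((N + Adᴴ) * (Pm * (Az + Ad)) - Pm) * R) := by
          simp only [Matrix.add_mul, Matrix.mul_add, Matrix.sub_mul, Matrix.mul_sub,
            Matrix.mul_assoc, hR1, Matrix.mul_one, hMN]
          abel
      _ = 0 := by rw [e1, sub_self, Matrix.zero_mul, Matrix.mul_zero]
  -- derived pointwise rewriting rules
  have hPFx : ∀ X : Matrix (Fin n) (Fin p) ℂ, P * (Fd * X) = -(V * X) := fun X => by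
    rw [← Matrix.mul_assoc, hPF, Matrix.neg_mul]
  have hFPx : ∀ X : Matrix (Fin p) (Fin p) ℂ, Fdᴴ * (P * X) = -(Vᴴ * X) := fun X => by
    rw [← Matrix.mul_assoc, hFP, Matrix.neg_mul]
  have hFPFx : ∀ X : Matrix (Fin n) (Fin p) ℂ,
      Fdᴴ * (P * (Fd * X)) = (Adᴴ * Pm * Ad - Pm + Cdᴴ * Cd) * X := fun X => by
    rw [show P * (Fd * X) = (P * Fd) * X from (Matrix.mul_assoc _ _ _).symm,
      ← Matrix.mul_assoc, hFPF]
  have hVFx : ∀ X : Matrix (Fin n) (Fin p) ℂ,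
      Vᴴ * (Fd * X) = -((Adᴴ * Pm * Ad - Pm + Cdᴴ * Cd) * X) := fun X => by
    have hVneg : Vᴴ = -(Fdᴴ * P) := by rw [hFP, neg_neg]
    rw [hVneg, Matrix.neg_mul, Matrix.mul_assoc, hFPFx]
  have hFVx : ∀ X : Matrix (Fin n) (Fin p) ℂ,
      Fdᴴ * (V * X) = -((Adᴴ * Pm * Ad - Pm + Cdᴴ * Cd) * X) := fun X => by
    have hVneg : V = -(P * Fd) := by rw [hPF, neg_neg]
    rw [hVneg, Matrix.neg_mul, Matrix.mul_neg, Matrix.mul_assoc, hFPFx]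
  have hkey2 : Bdᴴ * ((Pm + M * (Adᴴ * Pm) + Pm * (Ad * R) +
      M * ((Adᴴ * (Pm * Ad) - Pm) * R)) * Bd) = 0 := by
    rw [hkey, Matrix.zero_mul, Matrix.mul_zero]
  -- reduce the left-hand side
  have hL : (Phalf * (1 - Fd * S * Bd))ᴴ * (Phalf * (1 - Fd * R * Bd)) =
      (1 - Bdᴴ * (M * Fdᴴ)) * (P * (1 - Fd * R * Bd)) := by
    rw [conjTranspose_mul, conjTranspose_sub, conjTranspose_one, Matrix.mul_assoc,
      ← Matrix.mul_assoc Phalfᴴ, hPhalfHerm.eq, hPhalfSq, conjTranspose_mul,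
      conjTranspose_mul, ← hMdef]
  rw [hL, ← sub_eq_zero]
  calc (1 - Bdᴴ * (M * Fdᴴ)) * (P * (1 - Fd * R * Bd)) -
        (1 + (Cd * S * Bd + Dd)ᴴ * (Cd * R * Bd + Dd))
      = Bdᴴ * ((Pm + M * (Adᴴ * Pm) + Pm * (Ad * R) +
          M * ((Adᴴ * (Pm * Ad) - Pm) * R)) * Bd) := by
        simp only [conjTranspose_add, conjTranspose_mul, ← hMdef,
          Matrix.mul_sub, Matrix.sub_mul, Matrix.mul_add, Matrix.add_mul,
          Matrix.mul_one, Matrix.one_mul, Matrix.mul_assoc, hPFx, hFPx, hVFx, hFVx,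
          hFP, hVh, Matrix.neg_mul, Matrix.mul_neg, neg_neg, neg_sub, sub_neg_eq_add]
        simp only [hP, hV, Matrix.mul_sub, Matrix.sub_mul, Matrix.mul_add,
          Matrix.add_mul, Matrix.mul_one, Matrix.one_mul, Matrix.mul_assoc,
          Matrix.neg_mul, Matrix.mul_neg, neg_neg, neg_sub, sub_neg_eq_add]
        abel
    _ = 0 := hkey2
end
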